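/- arXiv:1908.02250 — 2 statements merged into one kernel-verified Lean document; each statement's English description precedes it below -/
import Mathlib

section
/- For every positive integer n, D(n) = n − 2^k · τ((n+1)/2^k − 1), where k = ⌊log₂ n⌋. -/
/-- f m = (#1 digits) - (#0 digits) in the binary expansion of m. -/
def f (m : ℕ) : ℤ :=
  2 * ((Nat.digits 2 m).count 1 : ℤ) - ((Nat.digits 2 m).length : ℤ)

/-- Cumulated deficient binary digit sum (OEIS A268289), D 0 = 0. -/
def D (n : ℕ) : ℤ := ∑ m ∈ Finset.Icc 1 n, f m

/-- Distance from y to the nearest integer. -/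
noncomputable def s (y : ℝ) : ℝ := |y - round y|

/-- The Takagi function. -/
noncomputable def τ (x : ℝ) : ℝ := ∑' n : ℕ, s (2 ^ n * x) / 2 ^ n

/-!
Write `n = 2^k - 1 + r` with `0 ≤ r ≤ 2^k`. Raising `r` by one adds
`f (2^k + r) = 2 bitCount r + 1 - k` to `D n`, so `n - D n` grows by `k - 2 bitCount r`.
The self-similarity `τ (x/2) = x/2 + τ x / 2`, `τ ((x+1)/2) = (1-x)/2 + τ x / 2` on `[0, 1]`
shows, by induction on `k`, that `2^k τ (r/2^k)` has the same increments. Both sides vanish at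
`r = 0`; at `r = 2^k` the right side is `2^k τ 1 = 0`, so `D (2^(k+1) - 1) = 2^(k+1) - 1` and the
comparison restarts at the next power of two.
-/

lemma s_natCast (k : ℕ) : s k = 0 := by simp [s]

lemma s_add_natCast (y : ℝ) (k : ℕ) : s (y + k) = s y := by
  simp [s, round_add_natCast]

lemma s_eq_min (y : ℝ) (h0 : 0 ≤ y) (h1 : y ≤ 1) : s y = min y (1 - y) := by
  rcases h1.lt_or_eq with h1 | rfl
  · rw [s, abs_sub_round_eq_min, Int.fract_eq_self.2 ⟨h0, h1⟩]
  · simpa using s_natCast 1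

lemma summable_takagi (x : ℝ) : Summable fun n : ℕ ↦ s (2 ^ n * x) / 2 ^ n := by
  refine summable_geometric_two.of_nonneg_of_le (fun n ↦ by unfold s; positivity) fun n ↦ ?_
  rw [one_div_pow]
  gcongr
  exact (abs_sub_round _).trans (by norm_num)

lemma tau_eq_s_add (x : ℝ) : τ x = s x + τ (2 * x) / 2 := by
  rw [τ, (summable_takagi x).tsum_eq_zero_add, τ, ← tsum_div_const]
  congr 1
  · simp
  · congr 1
    funext n
    ring_nf

lemma tau_add_one (x : ℝ) : τ (x + 1) = τ x := by
  unfold τ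
  congr 1
  funext n
  rw [show (2 : ℝ) ^ n * (x + 1) = 2 ^ n * x + ((2 ^ n : ℕ) : ℝ) by push_cast; ring,
    s_add_natCast]

lemma tau_zero : τ 0 = 0 := by simp [τ, s]

lemma tau_one : τ 1 = 0 := by simpa [tau_zero] using tau_add_one 0

lemma tau_half (x : ℝ) (h0 : 0 ≤ x) (h1 : x ≤ 1) : τ (x / 2) = x / 2 + τ x / 2 := by
  rw [tau_eq_s_add, s_eq_min _ (by linarith) (by linarith), min_eq_left (by linarith),
    mul_div_cancel₀ _ two_ne_zero]

lemma tau_add_one_half (x : ℝ) (h0 : 0 ≤ x) (h1 : x ≤ 1) :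
    τ ((x + 1) / 2) = (1 - x) / 2 + τ x / 2 := by
  rw [tau_eq_s_add, s_eq_min _ (by linarith) (by linarith), min_eq_right (by linarith),
    mul_div_cancel₀ _ two_ne_zero, tau_add_one]
  ring

def bitCount (m : ℕ) : ℕ := (Nat.digits 2 m).count 1

lemma digits_two_pow_add {k r : ℕ} (hr : r < 2 ^ k) :
    Nat.digits 2 (2 ^ k + r) =
      Nat.digits 2 r ++ List.replicate (k - (Nat.digits 2 r).length) 0 ++ [1] := by
  have hlen : (Nat.digits 2 r).length ≤ k := (Nat.digits_length_le_iff one_lt_two r).2 hr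
  rw [show [1] = Nat.digits 2 1 by simp,
    Nat.digits_append_zeroes_append_digits one_lt_two one_pos, Nat.add_sub_cancel' hlen,
    mul_one, add_comm]

lemma bitCount_two_pow_add {k r : ℕ} (hr : r < 2 ^ k) :
    bitCount (2 ^ k + r) = bitCount r + 1 := by
  rw [bitCount, bitCount, digits_two_pow_add hr]
  simp [List.count_replicate]

lemma f_two_pow_add {k r : ℕ} (hr : r < 2 ^ k) : f (2 ^ k + r) = 2 * bitCount r + 1 - k := by
  have hlen : (Nat.digits 2 r).length ≤ k := (Nat.digits_length_le_iff one_lt_two r).2 hr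
  rw [f, bitCount, digits_two_pow_add hr]
  simp [List.count_replicate]
  omega

lemma two_pow_succ_mul_tau_div (k m : ℕ) (hm : m ≤ 2 ^ k) :
    (2 : ℝ) ^ (k + 1) * τ (m / 2 ^ (k + 1)) = m + 2 ^ k * τ (m / 2 ^ k) := by
  have h := tau_half ((m : ℝ) / 2 ^ k) (by positivity)
    ((div_le_one (by positivity)).2 (by exact_mod_cast hm))
  rw [div_div, ← pow_succ] at h
  rw [h, pow_succ]
  field_simp

lemma two_pow_succ_mul_tau_two_pow_add_div (k m : ℕ) (hm : m ≤ 2 ^ k) :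
    (2 : ℝ) ^ (k + 1) * τ ((2 ^ k + m) / 2 ^ (k + 1)) = 2 ^ k - m + 2 ^ k * τ (m / 2 ^ k) := by
  have h := tau_add_one_half ((m : ℝ) / 2 ^ k) (by positivity)
    ((div_le_one (by positivity)).2 (by exact_mod_cast hm))
  rw [show ((2 : ℝ) ^ k + m) / 2 ^ (k + 1) = (m / 2 ^ k + 1) / 2 by field_simp; ring, h, pow_succ]
  field_simp

lemma two_pow_mul_tau_add_one_sub (k m : ℕ) (hm : m < 2 ^ k) :
    (2 : ℝ) ^ k * (τ ((m + 1) / 2 ^ k) - τ (m / 2 ^ k)) = k - 2 * bitCount m := by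
  induction k generalizing m with
  | zero =>
    obtain rfl : m = 0 := by simpa using hm
    simp [tau_zero, tau_one, bitCount]
  | succ k ih =>
    rcases lt_or_ge m (2 ^ k) with hm' | hm'
    · have h0 := two_pow_succ_mul_tau_div k m hm'.le
      have h1 := two_pow_succ_mul_tau_div k (m + 1) hm'
      push_cast at h1 ⊢
      linear_combination h1 - h0 + ih m hm'
    · obtain ⟨r, rfl⟩ : ∃ r, m = 2 ^ k + r := ⟨m - 2 ^ k, by omega⟩
      have hr : r < 2 ^ k := by rw [pow_succ] at hm; omega
      have h0 := two_pow_succ_mul_tau_two_pow_add_div k r hr.le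
      have h1 := two_pow_succ_mul_tau_two_pow_add_div k (r + 1) hr
      rw [bitCount_two_pow_add hr]
      push_cast at h1 ⊢
      rw [← add_assoc] at h1
      linear_combination h1 - h0 + ih r hr

lemma D_add_one (n : ℕ) : D (n + 1) = D n + f (n + 1) :=
  Finset.sum_Icc_succ_top (by omega) _

lemma sub_D_two_pow_sub_one_add (k : ℕ) (hbase : D (2 ^ k - 1) = 2 ^ k - 1) (r : ℕ)
    (hr : r ≤ 2 ^ k) :
    ((2 ^ k - 1 + r : ℕ) : ℝ) - D (2 ^ k - 1 + r) = 2 ^ k * τ (r / 2 ^ k) := by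
  induction r with
  | zero => simp [hbase, tau_zero]
  | succ r ih =>
    have hr' : r < 2 ^ k := hr
    rw [show 2 ^ k - 1 + (r + 1) = 2 ^ k - 1 + r + 1 by omega, D_add_one,
      show 2 ^ k - 1 + r + 1 = 2 ^ k + r by omega, f_two_pow_add hr']
    have hstep := two_pow_mul_tau_add_one_sub k r hr'
    have hprev := ih hr'.le
    push_cast [Nat.cast_sub Nat.one_le_two_pow] at hprev ⊢
    linear_combination hprev - hstep

lemma D_two_pow_sub_one (k : ℕ) : D (2 ^ k - 1) = 2 ^ k - 1 := by
  induction k with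
  | zero => simp [D]
  | succ k ih =>
    have h := sub_D_two_pow_sub_one_add k ih (2 ^ k) le_rfl
    rw [show 2 ^ k - 1 + 2 ^ k = 2 ^ (k + 1) - 1 by rw [pow_succ]; omega,
      Nat.cast_pow, Nat.cast_ofNat, div_self (by positivity), tau_one, mul_zero, sub_eq_zero] at h
    push_cast [Nat.cast_sub Nat.one_le_two_pow] at h
    exact_mod_cast h.symm

theorem stmt_8 (n : ℕ) (hn : 0 < n) :
    (D n : ℝ) = n - 2 ^ Nat.log 2 n * τ ((n + 1) / 2 ^ Nat.log 2 n - 1) := by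
  set k := Nat.log 2 n
  have hlo : 2 ^ k ≤ n := Nat.pow_log_le_self 2 hn.ne'
  have hhi : n < 2 ^ (k + 1) := Nat.lt_pow_succ_log_self one_lt_two n
  have hr : n + 1 - 2 ^ k ≤ 2 ^ k := by rw [pow_succ] at hhi; omega
  have h := sub_D_two_pow_sub_one_add k (D_two_pow_sub_one k) (n + 1 - 2 ^ k) hr
  rw [show 2 ^ k - 1 + (n + 1 - 2 ^ k) = n by omega, Nat.cast_sub (by omega)] at h
  push_cast at h
  rw [sub_div, div_self (by positivity)] at h
  linarith
end

section
/- For nonnegative integers n, k with n ≤ 2^k, D(2^(k+2) + 2^(k+1) + n − 1) = 2^(k+1) − n + D(2^(k+1) + 2^k + n − 1). -/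
/-!
Writing `a = 3 * 2 ^ k`, the claim is `D (2a + n - 1) - D (a + n - 1) = 2 ^ (k + 1) - n`.
Pairing `2m` with `2m + 1` gives `D (2b + 1) + 1 = 2 (D b + 1)`, so `D (2 ^ k c - 1) + 1` scales
by `2 ^ k`; this settles `n = 0`, since `D 5 - D 2 = 2`. Increasing `n` by one adds `f (2a + n)`
and `f (a + n)`, and for `n < 2 ^ k` the binary expansion of `2a + n` is that of `a + n` with one
more zero inserted above the last `k` digits, so the difference drops by exactly one.
-/

lemma f_two_mul {m : ℕ} (hm : m ≠ 0) : f (2 * m) = f m - 1 := by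
  unfold f
  rw [Nat.digits_def' (by norm_num) (by positivity), Nat.mul_mod_right,
    Nat.mul_div_cancel_left _ (by norm_num)]
  simp only [ne_eq, zero_ne_one, not_false_eq_true, List.count_cons_of_ne, List.length_cons,
    Nat.cast_add, Nat.cast_one]
  ring

lemma f_two_mul_add_one (m : ℕ) : f (2 * m + 1) = f m + 1 := by
  unfold f
  rw [Nat.digits_def' (by norm_num) (by positivity), Nat.mul_add_mod,
    Nat.mul_add_div (by norm_num)]
  simp only [Nat.mod_succ, Nat.reduceDiv, add_zero, List.count_cons_self, List.length_cons,
    Nat.cast_add, Nat.cast_one]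
  ring

lemma f_two_pow_mul_two_mul_add {m : ℕ} (hm : m ≠ 0) (k : ℕ) {n : ℕ} (hn : n < 2 ^ k) :
    f (2 ^ k * (2 * m) + n) = f (2 ^ k * m + n) - 1 := by
  induction k generalizing n with
  | zero =>
    obtain rfl : n = 0 := by simpa using hn
    simpa using f_two_mul hm
  | succ k ih =>
    obtain ⟨q, rfl | rfl⟩ := Nat.even_or_odd' n
    · have hq : q < 2 ^ k := by omega
      have hpos : 0 < 2 ^ k * m := by positivity
      rw [show 2 ^ (k + 1) * (2 * m) + 2 * q = 2 * (2 ^ k * (2 * m) + q) by ring,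
        show 2 ^ (k + 1) * m + 2 * q = 2 * (2 ^ k * m + q) by ring,
        f_two_mul (by positivity), f_two_mul (by omega), ih hq]
    · have hq : q < 2 ^ k := by omega
      rw [show 2 ^ (k + 1) * (2 * m) + (2 * q + 1) = 2 * (2 ^ k * (2 * m) + q) + 1 by ring,
        show 2 ^ (k + 1) * m + (2 * q + 1) = 2 * (2 ^ k * m + q) + 1 by ring,
        f_two_mul_add_one, f_two_mul_add_one, ih hq]
      ring

lemma D_eq_D_sub_one_add {m : ℕ} (hm : m ≠ 0) : D m = D (m - 1) + f m := by
  obtain ⟨m, rfl⟩ := Nat.exists_eq_add_one_of_ne_zero hm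
  rw [Nat.add_sub_cancel, D, D, Finset.sum_Icc_succ_top (by omega)]

lemma D_two_mul_add_one (b : ℕ) : D (2 * b + 1) = 2 * D b + 1 := by
  induction b with
  | zero => decide
  | succ b ih =>
    rw [D_eq_D_sub_one_add (by omega), show 2 * (b + 1) + 1 - 1 = 2 * (b + 1) by omega,
      D_eq_D_sub_one_add (by omega), show 2 * (b + 1) - 1 = 2 * b + 1 by omega, ih,
      D_eq_D_sub_one_add (m := b + 1) (by omega), Nat.add_sub_cancel, f_two_mul (by omega),
      f_two_mul_add_one]
    ring

lemma D_two_pow_mul_sub_one {c : ℕ} (hc : c ≠ 0) (k : ℕ) :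
    D (2 ^ k * c - 1) + 1 = 2 ^ k * (D (c - 1) + 1) := by
  induction k with
  | zero => simp
  | succ k ih =>
    have hpos : 0 < 2 ^ k * c := by positivity
    have hsplit : 2 ^ (k + 1) * c - 1 = 2 * (2 ^ k * c - 1) + 1 := by
      rw [pow_succ, mul_comm _ 2, mul_assoc]; omega
    rw [hsplit, D_two_mul_add_one, pow_succ]
    linear_combination 2 * ih

theorem stmt_12 (n k : ℕ) (h : n ≤ 2 ^ k) :
    D (2 ^ (k + 2) + 2 ^ (k + 1) + n - 1) = 2 ^ (k + 1) - n + D (2 ^ (k + 1) + 2 ^ k + n - 1) := by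
  rw [show 2 ^ (k + 2) + 2 ^ (k + 1) = 2 ^ k * (2 * 3) by ring,
    show 2 ^ (k + 1) + 2 ^ k = 2 ^ k * 3 by ring]
  induction n with
  | zero =>
    have h6 := D_two_pow_mul_sub_one (c := 2 * 3) (by norm_num) k
    have h3 := D_two_pow_mul_sub_one (c := 3) (by norm_num) k
    have hsmall : D 5 = D 2 + 2 := by decide
    norm_num at h6 h3 ⊢
    linear_combination h6 - h3 + 2 ^ k * hsmall
  | succ n ih =>
    have hpos : 0 < 2 ^ k := by positivity
    rw [Nat.add_succ_sub_one, Nat.add_succ_sub_one, D_eq_D_sub_one_add (by omega),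
      D_eq_D_sub_one_add (m := 2 ^ k * 3 + n) (by omega), ih (by omega),
      f_two_pow_mul_two_mul_add (by norm_num) k (by omega)]
    push_cast
    ring
end
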